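/- arXiv:1311.5286 — 4 statements merged into one kernel-verified Lean document; each statement's English description precedes it below -/
import Mathlib

section
/- Let S = (S(n))ₙ, S(n) ⊆ (S_n)^g, be closed with respect to direct sums, with each S(n) an open subset of (S_n)^g. Define the matrix convex hull co^mat S by: X ∈ (co^mat S)(n) iff there exist m, Z ∈ S(m), and an isometry V : ℂⁿ → ℂᵐ with X = V*ZV. Then each (co^mat S)(n) is open. -/
/-! Compressing by an isometry `V` (`Vᴴ * V = 1`), `Z ↦ Vᴴ * Z * V`, is an open map: through
every `Z` it has the continuous section `Y ↦ Z + V * (Y - Vᴴ * Z * V) * Vᴴ`. Hence for fixed `m`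
and `V` the compressions of the open set `S m` form an open set, and `co^mat S (n)` is the union
of these over all `m` and `V`. -/

open Matrix
open scoped ComplexOrder

noncomputable section

/-- `g`-tuples of `n × n` Hermitian (self-adjoint) complex matrices, with the
norm (product) topology inherited from matrix space. -/
abbrev HTup (g n : ℕ) := Fin g → selfAdjoint (Matrix (Fin n) (Fin n) ℂ)

namespace Matrix

variable {α ι m n : Type*} [Ring α] [StarRing α] [Fintype m]

def compression (V : Matrix m n α) (Z : ι → selfAdjoint (Matrix m m α)) :
    ι → selfAdjoint (Matrix n n α) :=
  fun j => ⟨Vᴴ * (Z j : Matrix m m α) * V, isHermitian_conjTranspose_mul_mul V (Z j).2⟩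

theorem conjTranspose_mul_add_mul_mul_conjTranspose_mul [Fintype n] [DecidableEq n]
    {V : Matrix m n α} (hV : Vᴴ * V = 1) (Z : Matrix m m α) (A : Matrix n n α) :
    Vᴴ * (Z + V * A * Vᴴ) * V = Vᴴ * Z * V + A := by
  calc Vᴴ * (Z + V * A * Vᴴ) * V = Vᴴ * Z * V + (Vᴴ * V) * A * (Vᴴ * V) := by
        simp only [Matrix.mul_add, Matrix.add_mul, Matrix.mul_assoc]
    _ = Vᴴ * Z * V + A := by rw [hV, Matrix.one_mul, Matrix.mul_one]

theorem isOpenMap_compression [Fintype n] [DecidableEq n] [TopologicalSpace α]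
    [IsTopologicalRing α] {V : Matrix m n α} (hV : Vᴴ * V = 1) :
    IsOpenMap (compression (ι := ι) V) := by
  refine IsOpenMap.of_sections fun Z => ⟨fun Y j => Z j +
    ⟨V * ((Y j : Matrix n n α) - (compression V Z j : Matrix n n α)) * Vᴴ,
      isHermitian_mul_mul_conjTranspose V (Y j - compression V Z j).2⟩, ?_, ?_, ?_⟩
  · fun_prop
  · ext1 j
    simp
  · intro Y
    ext1 j
    apply Subtype.ext
    simp [compression, conjTranspose_mul_add_mul_mul_conjTranspose_mul hV]

end Matrix

theorem stmt3_general {g : ℕ} (S : ∀ n : ℕ, Set (HTup g n))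
    (hopen : ∀ n, IsOpen (S n)) (n : ℕ) :
    IsOpen {X : HTup g n | ∃ (m : ℕ) (Z : HTup g m), Z ∈ S m ∧
      ∃ V : Matrix (Fin m) (Fin n) ℂ, Vᴴ * V = 1 ∧
        ∀ j, (X j : Matrix (Fin n) (Fin n) ℂ) =
          Vᴴ * (Z j : Matrix (Fin m) (Fin m) ℂ) * V} := by
  rw [isOpen_iff_mem_nhds]
  rintro X ⟨m, Z, hZ, V, hV, hX⟩
  have hXZ : compression V Z = X := funext fun j => Subtype.ext (hX j).symm
  refine Filter.mem_of_superset
    ((isOpenMap_compression hV _ (hopen m)).mem_nhds ⟨Z, hZ, hXZ⟩) ?_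
  rintro _ ⟨Z', hZ', rfl⟩
  exact ⟨m, Z', hZ', V, hV, fun _ => rfl⟩

/-- if `S` is closed with respect to direct sums and each level `S(n)` is
open, then each level of the matrix convex hull
`co^mat S (n) = {V*ZV : Z ∈ S(m), V : ℂⁿ → ℂᵐ an isometry}` is open. -/
theorem stmt3 {g : ℕ} (S : ∀ n : ℕ, Set (HTup g n))
    (hsum : ∀ m n (X : HTup g m) (Y : HTup g n), X ∈ S m → Y ∈ S n →
      ∀ Z : HTup g (m + n),
        (∀ j, (Z j : Matrix (Fin (m + n)) (Fin (m + n)) ℂ) =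
          (Matrix.fromBlocks (X j : Matrix (Fin m) (Fin m) ℂ) 0 0
            (Y j : Matrix (Fin n) (Fin n) ℂ)).submatrix finSumFinEquiv.symm finSumFinEquiv.symm) →
        Z ∈ S (m + n))
    (hopen : ∀ n, IsOpen (S n)) (n : ℕ) :
    IsOpen {X : HTup g n | ∃ (m : ℕ) (Z : HTup g m), Z ∈ S m ∧
      ∃ V : Matrix (Fin m) (Fin n) ℂ, Vᴴ * V = 1 ∧
        ∀ j, (X j : Matrix (Fin n) (Fin n) ℂ) =
          Vᴴ * (Z j : Matrix (Fin m) (Fin m) ℂ) * V} :=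
  stmt3_general S hopen n
end
end

section
/- Let C = (C(n))ₙ be a matrix convex subset of (S_n^g)ₙ and let L(x) = A₀ + Σⱼ Aⱼ xⱼ be a linear pencil with A₀,…,A_g ∈ S_k (k×k Hermitian). If L(X) ⪰ 0 for all X ∈ C(k), then L(X) ⪰ 0 for all n and all X ∈ C(n). -/
/-!
For `N ≥ k` and `Z ∈ C(N)`, a vector `v = Σⱼ eⱼ ⊗ vⱼ` is tested on a `k`-dimensional subspace
containing `v₁, …, v_k`: if `V` is an isometry onto it and `v = (I ⊗ V) w`, then
`⟨L(Z) v, v⟩ = ⟨L(V* Z V) w, w⟩ ≥ 0` because `V* Z V ∈ C(k)`. A level `n < k` is reduced to level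
`2n` through `X ⊕ X ∈ C(2n)`, whose compression to the first summand is `X`; compressions preserve
positivity of `L` since `L(V* Y V) = (I ⊗ V)* L(Y) (I ⊗ V)`.
-/

open Matrix
open scoped ComplexOrder Kronecker

noncomputable section

abbrev Tup (g n : ℕ) := Fin g → Matrix (Fin n) (Fin n) ℂ

def dirSum {g m n : ℕ} (X : Tup g m) (Y : Tup g n) : Tup g (m + n) :=
  fun j => (Matrix.fromBlocks (X j) 0 0 (Y j)).submatrix finSumFinEquiv.symm finSumFinEquiv.symm

def conjTup {g m n : ℕ} (V : Matrix (Fin n) (Fin m) ℂ) (X : Tup g n) : Tup g m :=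
  fun j => Vᴴ * X j * V

/-- Evaluation of the linear pencil `L(x) = A₀ + Σⱼ Aⱼ xⱼ` at a tuple `X`:
`L(X) = A₀ ⊗ Iₙ + Σⱼ Aⱼ ⊗ Xⱼ`. -/
def pencilEval {g k n : ℕ} (A₀ : Matrix (Fin k) (Fin k) ℂ)
    (A : Fin g → Matrix (Fin k) (Fin k) ℂ) (X : Tup g n) :
    Matrix (Fin k × Fin n) (Fin k × Fin n) ℂ :=
  A₀ ⊗ₖ (1 : Matrix (Fin n) (Fin n) ℂ) + ∑ j, (A j) ⊗ₖ X j

open Module Submodule Set InnerProductSpace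

/- Gram–Schmidt on `u` padded by zeros gives a basis that is triangular with respect to the
padded family, so each `u j` only involves the first `k` basis vectors. -/
theorem exists_orthonormal_forall_mem_span {𝕜 E : Type*} [RCLike 𝕜] [NormedAddCommGroup E]
    [InnerProductSpace 𝕜 E] [FiniteDimensional 𝕜 E] {k : ℕ} (hk : k ≤ finrank 𝕜 E)
    (u : Fin k → E) : ∃ e : Fin k → E, Orthonormal 𝕜 e ∧ ∀ j, u j ∈ span 𝕜 (range e) := by
  let f : Fin (finrank 𝕜 E) → E := fun i => if h : (i : ℕ) < k then u ⟨i, h⟩ else 0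
  let b := gramSchmidtOrthonormalBasis (𝕜 := 𝕜) (Fintype.card_fin _).symm f
  refine ⟨fun j => b (Fin.castLE hk j), b.orthonormal.comp _ (Fin.castLE_injective hk),
    fun j => ?_⟩
  have hfu : f (Fin.castLE hk j) = u j := dif_pos j.isLt
  rw [← hfu, ← b.sum_repr' (f _)]
  refine sum_mem fun i _ => ?_
  by_cases hi : (i : ℕ) < k
  · exact smul_mem _ _ (subset_span ⟨⟨i, hi⟩, rfl⟩)
  · have hji : Fin.castLE hk j < i := Fin.lt_def.mpr (by rw [Fin.val_castLE]; omega)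
    rw [gramSchmidtOrthonormalBasis_inv_triangular _ _ hji, zero_smul]
    exact zero_mem _

theorem Matrix.exists_isometry_mul_eq {𝕜 : Type*} [RCLike 𝕜] {m n : ℕ} (hmn : m ≤ n)
    (U : Matrix (Fin n) (Fin m) 𝕜) :
    ∃ (V : Matrix (Fin n) (Fin m) 𝕜) (W : Matrix (Fin m) (Fin m) 𝕜), Vᴴ * V = 1 ∧ V * W = U := by
  obtain ⟨e, he, hspan⟩ := exists_orthonormal_forall_mem_span (𝕜 := 𝕜)
    (E := EuclideanSpace 𝕜 (Fin n)) (by simpa using hmn) fun j => WithLp.toLp 2 (Uᵀ j)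
  choose c hc using fun j => (mem_span_range_iff_exists_fun 𝕜).mp (hspan j)
  refine ⟨of fun i j => e j i, (of c)ᵀ, ?_, ?_⟩
  · rw [← gram_eq_one_iff_orthonormal.mpr he,
      gram_eq_conjTranspose_mul (EuclideanSpace.basisFun _ 𝕜)]
    simp
  · ext i j
    simpa [mul_apply, mul_comm] using congrArg (fun x => x i) (hc j)

theorem Matrix.conjTranspose_submatrix_one_mul_submatrix_one {R l m : Type*} [Semiring R]
    [StarRing R] [Fintype m] [DecidableEq l] [DecidableEq m] {e : l → m}
    (he : Function.Injective e) :
    ((1 : Matrix m m R).submatrix id e)ᴴ * (1 : Matrix m m R).submatrix id e = 1 := by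
  ext a b
  simp [mul_apply, one_apply, he.eq_iff]

theorem conjTup_submatrix_one {g m n : ℕ} (e : Fin m → Fin n) (X : Tup g n) :
    conjTup ((1 : Matrix (Fin n) (Fin n) ℂ).submatrix id e) X = fun j => (X j).submatrix e e := by
  funext j
  ext a b
  simp [conjTup, mul_apply, one_apply]

theorem conjTup_dirSum_castAdd {g m n : ℕ} (X : Tup g m) (Y : Tup g n) :
    conjTup ((1 : Matrix (Fin (m + n)) (Fin (m + n)) ℂ).submatrix id (Fin.castAdd n))
      (dirSum X Y) = X := by
  rw [conjTup_submatrix_one]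
  funext j
  ext a b
  simp [dirSum]

section Pencil

variable {g k : ℕ} {A₀ : Matrix (Fin k) (Fin k) ℂ} {A : Fin g → Matrix (Fin k) (Fin k) ℂ}

theorem isHermitian_pencilEval {n : ℕ} (hA₀ : A₀.IsHermitian) (hA : ∀ j, (A j).IsHermitian)
    {X : Tup g n} (hX : ∀ j, (X j).IsHermitian) : (pencilEval A₀ A X).IsHermitian := by
  refine IsHermitian.add ?_
    ((conjTranspose_sum _ _).trans (Finset.sum_congr rfl fun j _ => ?_))
  · rw [IsHermitian, conjTranspose_kronecker, hA₀.eq, conjTranspose_one]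
  · rw [conjTranspose_kronecker, (hA j).eq, (hX j).eq]

theorem pencilEval_conjTup {m n : ℕ} {V : Matrix (Fin n) (Fin m) ℂ} (hV : Vᴴ * V = 1)
    (Y : Tup g n) :
    pencilEval A₀ A (conjTup V Y) =
      ((1 : Matrix (Fin k) (Fin k) ℂ) ⊗ₖ V)ᴴ * pencilEval A₀ A Y *
        ((1 : Matrix (Fin k) (Fin k) ℂ) ⊗ₖ V) := by
  simp only [pencilEval, conjTup, conjTranspose_kronecker, conjTranspose_one, Matrix.mul_add,
    Matrix.add_mul, Matrix.mul_sum, Matrix.sum_mul, ← mul_kronecker_mul, Matrix.one_mul,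
    Matrix.mul_one, hV]

theorem posSemidef_pencilEval_conjTup {m n : ℕ} {V : Matrix (Fin n) (Fin m) ℂ} (hV : Vᴴ * V = 1)
    {Y : Tup g n} (hY : (pencilEval A₀ A Y).PosSemidef) :
    (pencilEval A₀ A (conjTup V Y)).PosSemidef := by
  rw [pencilEval_conjTup hV]
  exact hY.conjTranspose_mul_mul_same _

theorem posSemidef_pencilEval_of_dirSum {m n : ℕ} {X : Tup g m} {Y : Tup g n}
    (h : (pencilEval A₀ A (dirSum X Y)).PosSemidef) : (pencilEval A₀ A X).PosSemidef := by
  rw [← conjTup_dirSum_castAdd X Y]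
  exact posSemidef_pencilEval_conjTup
    (conjTranspose_submatrix_one_mul_submatrix_one (Fin.castAdd_injective m n)) h

theorem posSemidef_pencilEval_of_forall_compression {N : ℕ} (hkN : k ≤ N)
    (hA₀ : A₀.IsHermitian) (hA : ∀ j, (A j).IsHermitian) {Z : Tup g N}
    (hZ : ∀ j, (Z j).IsHermitian)
    (hcomp : ∀ V : Matrix (Fin N) (Fin k) ℂ, Vᴴ * V = 1 →
      (pencilEval A₀ A (conjTup V Z)).PosSemidef) :
    (pencilEval A₀ A Z).PosSemidef := by
  refine .of_dotProduct_mulVec_nonneg (isHermitian_pencilEval hA₀ hA hZ) fun v => ?_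
  -- `v = vec U` for the `N × k` matrix `U` whose columns are the `vⱼ`
  obtain ⟨V, W, hV, hVW⟩ := exists_isometry_mul_eq hkN (of fun i j => v (j, i))
  have hv : ((1 : Matrix (Fin k) (Fin k) ℂ) ⊗ₖ V) *ᵥ vec W = v := by
    rw [kronecker_mulVec_vec, transpose_one, Matrix.mul_one, hVW]
    rfl
  rw [← hv]
  simpa only [pencilEval_conjTup hV, star_mulVec, dotProduct_mulVec, vecMul_vecMul] using
    (hcomp V hV).dotProduct_mulVec_nonneg (vec W)

end Pencil

/-- a size-`k` linear pencil positive semidefinite on level `k` of a matrix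
convex set `C` is positive semidefinite on every level of `C`. -/
theorem stmt6 {g k : ℕ} (C : ∀ n : ℕ, Set (Tup g n))
    (hherm : ∀ n, ∀ X ∈ C n, ∀ j, (X j).IsHermitian)
    (hsum : ∀ m n (X : Tup g m) (Y : Tup g n), X ∈ C m → Y ∈ C n → dirSum X Y ∈ C (m + n))
    (hisom : ∀ m n (V : Matrix (Fin n) (Fin m) ℂ), Vᴴ * V = 1 →
      ∀ X ∈ C n, conjTup V X ∈ C m)
    (A₀ : Matrix (Fin k) (Fin k) ℂ) (A : Fin g → Matrix (Fin k) (Fin k) ℂ)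
    (hA₀ : A₀.IsHermitian) (hA : ∀ j, (A j).IsHermitian)
    (hk : ∀ X ∈ C k, (pencilEval A₀ A X).PosSemidef) :
    ∀ n, ∀ X ∈ C n, (pencilEval A₀ A X).PosSemidef := by
  have hlarge : ∀ N, k ≤ N → ∀ Z ∈ C N, (pencilEval A₀ A Z).PosSemidef :=
    fun N hkN Z hZ => posSemidef_pencilEval_of_forall_compression hkN hA₀ hA (hherm N Z hZ)
      fun V hV => hk _ (hisom k N V hV Z hZ)
  have hdoubling : ∀ d n, k ≤ n + d → ∀ X ∈ C n, (pencilEval A₀ A X).PosSemidef := by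
    intro d
    induction d with
    | zero => exact hlarge
    | succ d ih =>
      intro n hkn X hX
      rcases Nat.eq_zero_or_pos n with rfl | hn
      · rw [Subsingleton.elim (pencilEval A₀ A X) 0]
        exact .zero
      · exact posSemidef_pencilEval_of_dirSum (ih (n + n) (by omega) _ (hsum n n X X hX hX))
  exact fun n => hdoubling k n (Nat.le_add_left k n)
end
end

section
/- Let L(x) = A₀ + Σⱼ Aⱼ xⱼ be a linear pencil with Hermitian coefficients and let ℓ(x) = c₀ + Σⱼ cⱼ xⱼ be a real affine linear function. Then ℓ ≥ 0 on the scalar spectrahedron D_L(1) = {x ∈ ℝ^g : L(x) ⪰ 0} if and only if ℓ(X) := c₀ I + Σⱼ cⱼ Xⱼ ⪰ 0 for every n and every X ∈ D_L(n) = {X ∈ (S_n)^g : L(X) ⪰ 0}. -/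
/-!
If `L(X) ⪰ 0` and `u ≠ 0`, compressing by `I ⊗ u` gives
`(I ⊗ u)* L(X) (I ⊗ u) = t A₀ + Σⱼ sⱼ Aⱼ ⪰ 0` with `t = u*u > 0` and `sⱼ = u*Xⱼu`,
so `s / t` lies in `D_L(1)`; hence `ℓ(s / t) ≥ 0`, i.e. `u* ℓ(X) u = t ℓ(s / t) ≥ 0`.
Conversely, `x ∈ D_L(1)` is itself a point of the free spectrahedron at level `n = 1`,
where `ℓ(X) = ℓ(x)`.
-/

open Matrix
open scoped ComplexOrder Kronecker

noncomputable section

namespace Matrix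

theorem sum_kronecker {α ι l m n p : Type*} [CommSemiring α] (s : Finset ι)
    (f : ι → Matrix l m α) (B : Matrix n p α) : (∑ i ∈ s, f i) ⊗ₖ B = ∑ i ∈ s, f i ⊗ₖ B :=
  (kroneckerBilinear (R := α) (α := α)).map_sum₂ s f B

section Compression

variable {R m n : Type*} [CommSemiring R] [StarRing R] [Fintype m] [Fintype n]

theorem replicateRow_star_mul_mul_replicateCol (u : n → R) (Y : Matrix n n R) :
    replicateRow Unit (star u) * Y * replicateCol Unit u = (star u ⬝ᵥ Y *ᵥ u) • 1 := by
  rw [Matrix.mul_assoc, ← replicateCol_mulVec, replicateRow_mul_replicateCol]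
  ext
  simp

variable [DecidableEq m]

variable (m) in
/-- The matrix of `w ↦ w ⊗ u`, written `I ⊗ u` in the paper. -/
def kroneckerCol (u : n → R) : Matrix (m × n) (m × Unit) R := 1 ⊗ₖ replicateCol Unit u

theorem kroneckerCol_conjTranspose_mul_kronecker_mul (u : n → R) (B : Matrix m m R)
    (Y : Matrix n n R) :
    (kroneckerCol m u)ᴴ * (B ⊗ₖ Y) * kroneckerCol m u = (star u ⬝ᵥ Y *ᵥ u) • B ⊗ₖ 1 := by
  rw [kroneckerCol, conjTranspose_kronecker, conjTranspose_one, conjTranspose_replicateCol,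
    ← mul_kronecker_mul, ← mul_kronecker_mul, one_mul, mul_one,
    replicateRow_star_mul_mul_replicateCol, kronecker_smul]

end Compression

variable {R m n : Type*} [Ring R] [PartialOrder R] [StarRing R]

@[simp]
theorem posSemidef_kronecker_one_unit_iff {B : Matrix m m R} :
    (B ⊗ₖ (1 : Matrix Unit Unit R)).PosSemidef ↔ B.PosSemidef := by
  rw [← posSemidef_submatrix_equiv (Equiv.prodPUnit m).symm]
  convert Iff.rfl
  ext
  simp

theorem IsHermitian.ofReal_smul {M : Matrix n n ℂ} (hM : M.IsHermitian) (r : ℝ) :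
    ((r : ℂ) • M).IsHermitian :=
  IsSelfAdjoint.smul (Complex.conj_ofReal r) hM

theorem IsHermitian.ofReal_re_star_dotProduct_mulVec_self [Fintype n] {M : Matrix n n ℂ}
    (hM : M.IsHermitian) (u : n → ℂ) :
    ((star u ⬝ᵥ M *ᵥ u).re : ℂ) = star u ⬝ᵥ M *ᵥ u :=
  Complex.conj_eq_iff_re.mp (Complex.conj_eq_iff_im.mpr (hM.im_star_dotProduct_mulVec_self u))

end Matrix

section FreeSpectrahedron

variable {g k n : ℕ}

theorem kroneckerCol_conjTranspose_mul_pencilEval_mul (A₀ : Matrix (Fin k) (Fin k) ℂ)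
    (A : Fin g → Matrix (Fin k) (Fin k) ℂ) (X : Tup g n) (u : Fin n → ℂ) :
    (kroneckerCol (Fin k) u)ᴴ * pencilEval A₀ A X * kroneckerCol (Fin k) u =
      ((star u ⬝ᵥ (1 : Matrix (Fin n) (Fin n) ℂ) *ᵥ u) • A₀ +
        ∑ j, (star u ⬝ᵥ X j *ᵥ u) • A j) ⊗ₖ 1 := by
  simp only [pencilEval, Matrix.mul_add, Matrix.add_mul, Matrix.mul_sum, Matrix.sum_mul,
    kroneckerCol_conjTranspose_mul_kronecker_mul, add_kronecker, sum_kronecker, smul_kronecker]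

theorem Matrix.PosSemidef.compress_pencilEval {A₀ : Matrix (Fin k) (Fin k) ℂ}
    {A : Fin g → Matrix (Fin k) (Fin k) ℂ} {X : Tup g n} (hL : (pencilEval A₀ A X).PosSemidef)
    (u : Fin n → ℂ) :
    ((star u ⬝ᵥ (1 : Matrix (Fin n) (Fin n) ℂ) *ᵥ u) • A₀ +
      ∑ j, (star u ⬝ᵥ X j *ᵥ u) • A j).PosSemidef := by
  rw [← posSemidef_kronecker_one_unit_iff, ← kroneckerCol_conjTranspose_mul_pencilEval_mul]
  exact hL.conjTranspose_mul_mul_same _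

theorem pencilEval_ofReal_smul_one (A₀ : Matrix (Fin k) (Fin k) ℂ)
    (A : Fin g → Matrix (Fin k) (Fin k) ℂ) (x : Fin g → ℝ) :
    pencilEval A₀ A (fun j => (x j : ℂ) • (1 : Matrix (Fin n) (Fin n) ℂ)) =
      (A₀ + ∑ j, (x j : ℂ) • A j) ⊗ₖ 1 := by
  simp only [pencilEval, add_kronecker, sum_kronecker, kronecker_smul, smul_kronecker]

variable {A₀ : Matrix (Fin k) (Fin k) ℂ} {A : Fin g → Matrix (Fin k) (Fin k) ℂ} {c₀ : ℝ}
  {c : Fin g → ℝ}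

theorem homogenized_nonneg_of_nonneg_on_spectrahedron
    (h : ∀ x : Fin g → ℝ, (A₀ + ∑ j, (x j : ℂ) • A j).PosSemidef → 0 ≤ c₀ + ∑ j, c j * x j)
    {t : ℝ} (ht : 0 < t) {s : Fin g → ℝ}
    (hs : ((t : ℂ) • A₀ + ∑ j, (s j : ℂ) • A j).PosSemidef) :
    0 ≤ c₀ * t + ∑ j, c j * s j := by
  have hx : (A₀ + ∑ j, ((s j / t : ℝ) : ℂ) • A j).PosSemidef := by
    convert hs.smul (Complex.zero_le_real.mpr (inv_nonneg.mpr ht.le)) using 1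
    simp only [smul_add, Finset.smul_sum, smul_smul, ← Complex.ofReal_mul,
      inv_mul_cancel₀ ht.ne', Complex.ofReal_one, one_smul, div_eq_inv_mul]
  calc 0 ≤ t * (c₀ + ∑ j, c j * (s j / t)) := mul_nonneg ht.le (h _ hx)
    _ = c₀ * t + ∑ j, c j * s j := by
      rw [mul_add, Finset.mul_sum, mul_comm]
      congr 1
      exact Finset.sum_congr rfl fun j _ => by field_simp

theorem posSemidef_affine_of_nonneg_on_spectrahedron
    (h : ∀ x : Fin g → ℝ, (A₀ + ∑ j, (x j : ℂ) • A j).PosSemidef → 0 ≤ c₀ + ∑ j, c j * x j)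
    {X : Tup g n} (hX : ∀ j, (X j).IsHermitian) (hL : (pencilEval A₀ A X).PosSemidef) :
    ((c₀ : ℂ) • (1 : Matrix (Fin n) (Fin n) ℂ) + ∑ j, (c j : ℂ) • X j).PosSemidef := by
  refine .of_dotProduct_mulVec_nonneg
    ((isHermitian_one.ofReal_smul c₀).add (isSelfAdjoint_sum _ fun j _ => (hX j).ofReal_smul (c j)))
    fun u => ?_
  obtain rfl | hu := eq_or_ne u 0
  · simp
  set q : Matrix (Fin n) (Fin n) ℂ → ℝ := fun Y => (star u ⬝ᵥ Y *ᵥ u).re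
  have hq {Y : Matrix (Fin n) (Fin n) ℂ} (hY : Y.IsHermitian) : (q Y : ℂ) = star u ⬝ᵥ Y *ᵥ u :=
    hY.ofReal_re_star_dotProduct_mulVec_self u
  have hq₁ : 0 < q 1 := PosDef.one.re_dotProduct_pos hu
  have hℓ : 0 ≤ c₀ * q 1 + ∑ j, c j * q (X j) :=
    homogenized_nonneg_of_nonneg_on_spectrahedron h hq₁
      (by simpa only [hq isHermitian_one, hq (hX _)] using hL.compress_pencilEval u)
  calc (0 : ℂ) ≤ (c₀ * q 1 + ∑ j, c j * q (X j) : ℝ) := Complex.zero_le_real.mpr hℓ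
    _ = _ := by
      simp [hq isHermitian_one, hq (hX _), add_mulVec, Matrix.sum_mulVec, dotProduct_sum,
        smul_mulVec]

theorem nonneg_affine_of_posSemidef_on_free_spectrahedron
    (h : ∀ n (X : Tup g n), (∀ j, (X j).IsHermitian) → (pencilEval A₀ A X).PosSemidef →
      ((c₀ : ℂ) • (1 : Matrix (Fin n) (Fin n) ℂ) + ∑ j, (c j : ℂ) • X j).PosSemidef)
    {x : Fin g → ℝ} (hx : (A₀ + ∑ j, (x j : ℂ) • A j).PosSemidef) :
    0 ≤ c₀ + ∑ j, c j * x j := by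
  have hℓ := h 1 (fun j => (x j : ℂ) • 1) (fun j => isHermitian_one.ofReal_smul (x j))
    (by rw [pencilEval_ofReal_smul_one]; exact hx.kronecker .one)
  have h0 := hℓ.diag_nonneg (i := 0)
  simp only [Matrix.add_apply, Matrix.sum_apply, Matrix.smul_apply, one_apply_eq, Complex.coe_smul,
    Complex.real_smul, mul_one] at h0
  exact_mod_cast h0

end FreeSpectrahedron

theorem stmt7_general {g k : ℕ} (A₀ : Matrix (Fin k) (Fin k) ℂ)
    (A : Fin g → Matrix (Fin k) (Fin k) ℂ)
    (c₀ : ℝ) (c : Fin g → ℝ) :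
    (∀ x : Fin g → ℝ, (A₀ + ∑ j, (x j : ℂ) • A j).PosSemidef → 0 ≤ c₀ + ∑ j, c j * x j) ↔
    (∀ n (X : Tup g n), (∀ j, (X j).IsHermitian) → (pencilEval A₀ A X).PosSemidef →
      ((c₀ : ℂ) • (1 : Matrix (Fin n) (Fin n) ℂ) + ∑ j, (c j : ℂ) • X j).PosSemidef) :=
  ⟨fun h _ _ hX hL => posSemidef_affine_of_nonneg_on_spectrahedron h hX hL,
    fun h _ hx => nonneg_affine_of_posSemidef_on_free_spectrahedron h hx⟩

/-- an affine linear function `ℓ(x) = c₀ + Σⱼ cⱼxⱼ` is nonnegative on the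
scalar spectrahedron `D_L(1)` iff `ℓ(X) ⪰ 0` for every `X` in the free spectrahedron
`D_L(n)`, for all `n`. -/
theorem stmt7 {g k : ℕ} (A₀ : Matrix (Fin k) (Fin k) ℂ)
    (A : Fin g → Matrix (Fin k) (Fin k) ℂ)
    (hA₀ : A₀.IsHermitian) (hA : ∀ j, (A j).IsHermitian)
    (c₀ : ℝ) (c : Fin g → ℝ) :
    (∀ x : Fin g → ℝ, (A₀ + ∑ j, (x j : ℂ) • A j).PosSemidef → 0 ≤ c₀ + ∑ j, c j * x j) ↔
    (∀ n (X : Tup g n), (∀ j, (X j).IsHermitian) → (pencilEval A₀ A X).PosSemidef →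
      ((c₀ : ℂ) • (1 : Matrix (Fin n) (Fin n) ℂ) + ∑ j, (c j : ℂ) • X j).PosSemidef) :=
  stmt7_general A₀ A c₀ c
end
end

section
/- Let q(x,y,z) = y x² y + z x² z − 1 (symmetric free polynomial in three symmetric variables), and let S = {X : ∃ Y, Z Hermitian of the same size with q(X,Y,Z) ⪰ 0} be the projection of D_q onto the x-variable. Then I₃ ⊕ 0₃ (the 6×6 matrix with identity and zero 3×3 blocks) belongs to S(6), but the 3×3 zero matrix 0₃ does not belong to S(3). Hence S is not closed under restriction to reducing subspaces. -/
open Matrix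
open scoped ComplexOrder

noncomputable section

/-- Evaluation of `q(x,y,z) = y x² y + z x² z − 1`. -/
def qEval {n : ℕ} (X Y Z : Matrix (Fin n) (Fin n) ℂ) : Matrix (Fin n) (Fin n) ℂ :=
  Y * X * X * Y + Z * X * X * Z - 1

/-- The matrix `I₃ ⊕ 0₃`. -/
def X₀ : Matrix (Fin 6) (Fin 6) ℂ :=
  Matrix.diagonal (fun i => if (i : ℕ) < 3 then 1 else 0)

/-! The projection `X₀` is conjugated onto `1 - X₀` by the permutation matrix `Z` exchanging the
two blocks, so `q(X₀, 1, Z) = X₀ + (1 - X₀) - 1 = 0`. At `X = 0` on the other hand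
`q(0, Y, Z) = -1` whatever `Y, Z` are. -/

theorem Matrix.not_posSemidef_neg_one {n 𝕜 : Type*} [Fintype n] [DecidableEq n] [Nonempty n]
    [RCLike 𝕜] : ¬ (-1 : Matrix n n 𝕜).PosSemidef := fun h => by
  have : (1 : 𝕜) ≤ 0 := by simpa using h.diag_nonneg (i := Classical.arbitrary n)
  exact zero_lt_one.not_ge this

theorem Matrix.permMatrix_mul_diagonal_mul_permMatrix_inv {n R : Type*} [Fintype n]
    [DecidableEq n] [NonAssocSemiring R] (σ : Equiv.Perm n) (d : n → R) :
    σ.permMatrix R * diagonal d * σ⁻¹.permMatrix R = diagonal (d ∘ σ) := by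
  rw [PEquiv.toMatrix_toPEquiv_mul, PEquiv.mul_toMatrix_toPEquiv, submatrix_submatrix,
    Equiv.Perm.inv_def, Equiv.symm_symm]
  exact submatrix_diagonal_equiv d σ

theorem qEval_zero_left {n : ℕ} (Y Z : Matrix (Fin n) (Fin n) ℂ) : qEval 0 Y Z = -1 := by
  simp [qEval]

theorem qEval_one_eq_zero {n : ℕ} {P Z : Matrix (Fin n) (Fin n) ℂ} (hP : IsIdempotentElem P)
    (hZ : Z * P * Z = 1 - P) : qEval P 1 Z = 0 := by
  rw [qEval, Matrix.mul_assoc Z, hP.eq, hZ, one_mul, Matrix.mul_one, hP.eq]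
  abel

def blockSwap : Equiv.Perm (Fin 6) := Equiv.addRight 3

theorem blockSwap_inv : blockSwap⁻¹ = blockSwap := by decide

theorem isIdempotentElem_X₀ : IsIdempotentElem X₀ := by
  rw [IsIdempotentElem, X₀, diagonal_mul_diagonal]
  congr 1
  funext i
  split_ifs <;> simp

theorem blockSwap_conj_X₀ :
    blockSwap.permMatrix ℂ * X₀ * blockSwap.permMatrix ℂ = 1 - X₀ := by
  nth_rw 2 [← blockSwap_inv]
  rw [X₀, permMatrix_mul_diagonal_mul_permMatrix_inv, ← diagonal_one, diagonal_sub]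
  congr 1
  funext i
  fin_cases i <;> simp [blockSwap]

theorem isHermitian_blockSwap : (blockSwap.permMatrix ℂ).IsHermitian := by
  rw [IsHermitian, conjTranspose_permMatrix, blockSwap_inv]

/-- `I₃ ⊕ 0₃` lies in the projection `S` of `D_q` onto the `x`-variable,
but `0₃` does not; hence `S` is not closed under restriction to reducing subspaces. -/
theorem stmt9 :
    (∃ Y Z : Matrix (Fin 6) (Fin 6) ℂ, Y.IsHermitian ∧ Z.IsHermitian ∧
      (qEval X₀ Y Z).PosSemidef) ∧
    ¬ (∃ Y Z : Matrix (Fin 3) (Fin 3) ℂ, Y.IsHermitian ∧ Z.IsHermitian ∧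
      (qEval (0 : Matrix (Fin 3) (Fin 3) ℂ) Y Z).PosSemidef) := by
  refine ⟨⟨1, blockSwap.permMatrix ℂ, isHermitian_one, isHermitian_blockSwap, ?_⟩, ?_⟩
  · rw [qEval_one_eq_zero isIdempotentElem_X₀ blockSwap_conj_X₀]
    exact PosSemidef.zero
  · rintro ⟨Y, Z, -, -, hq⟩
    rw [qEval_zero_left] at hq
    exact not_posSemidef_neg_one hq
end
end
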